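/- arXiv:math/0501341 — 14 statements merged into one kernel-verified Lean document; each statement's English description precedes it below -/
import Mathlib

section
/- For any poset (P, ≤) and order-convex subsets X, Y of P, the join of X and Y in the lattice Co(P) equals X ∪ Y ∪ { z ∈ P : there exist x ∈ X and y ∈ Y with x < z < y or y < z < x }. -/
/-- The candidate join of two order-convex sets. -/
def cJoin {P : Type*} [PartialOrder P] (X Y : Set P) : Set P :=
  X ∪ Y ∪ {z | ∃ x ∈ X, ∃ y ∈ Y, (x < z ∧ z < y) ∨ (y < z ∧ z < x)}

/-- The join of `X` and `Y` in `Co(P)` is `X ∪ Y ∪ {z | ∃ x ∈ X, y ∈ Y, x < z < y or y < z < x}`: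
this set is order-convex, contains `X` and `Y`, and is least such. -/
theorem co_join_formula {P : Type*} [PartialOrder P] (X Y : Set P)
    (hX : X.OrdConnected) (hY : Y.OrdConnected) :
    (cJoin X Y).OrdConnected ∧ X ⊆ cJoin X Y ∧ Y ⊆ cJoin X Y ∧
      ∀ Z : Set P, Z.OrdConnected → X ⊆ Z → Y ⊆ Z → cJoin X Y ⊆ Z := by
  refine ⟨⟨?_⟩, fun x hx => Or.inl (Or.inl hx), fun y hy => Or.inl (Or.inr hy), ?_⟩
  · intro a ha b hb z hz
    obtain ⟨hz1, hz2⟩ := hz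
    have lower : (∃ x ∈ X, x ≤ z) ∨ (∃ y ∈ Y, y ≤ z) := by
      rcases ha with (hx | hy) | ⟨x, hx, y, hy, h | h⟩
      · exact Or.inl ⟨a, hx, hz1⟩
      · exact Or.inr ⟨a, hy, hz1⟩
      · exact Or.inl ⟨x, hx, h.1.le.trans hz1⟩
      · exact Or.inr ⟨y, hy, h.1.le.trans hz1⟩
    have upper : (∃ x ∈ X, z ≤ x) ∨ (∃ y ∈ Y, z ≤ y) := by
      rcases hb with (hx | hy) | ⟨x, hx, y, hy, h | h⟩
      · exact Or.inl ⟨b, hx, hz2⟩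
      · exact Or.inr ⟨b, hy, hz2⟩
      · exact Or.inr ⟨y, hy, hz2.trans h.2.le⟩
      · exact Or.inl ⟨x, hx, hz2.trans h.2.le⟩
    rcases lower with ⟨x, hx, hxz⟩ | ⟨y, hy, hyz⟩ <;>
      rcases upper with ⟨x', hx', hzx'⟩ | ⟨y', hy', hzy'⟩
    · exact Or.inl (Or.inl (hX.out hx hx' ⟨hxz, hzx'⟩))
    · rcases hxz.eq_or_lt with rfl | hlt
      · exact Or.inl (Or.inl hx)
      · rcases hzy'.eq_or_lt with rfl | hlt'
        · exact Or.inl (Or.inr hy')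
        · exact Or.inr ⟨x, hx, y', hy', Or.inl ⟨hlt, hlt'⟩⟩
    · rcases hyz.eq_or_lt with rfl | hlt
      · exact Or.inl (Or.inr hy)
      · rcases hzx'.eq_or_lt with rfl | hlt'
        · exact Or.inl (Or.inl hx')
        · exact Or.inr ⟨x', hx', y, hy, Or.inr ⟨hlt, hlt'⟩⟩
    · exact Or.inl (Or.inr (hY.out hy hy' ⟨hyz, hzy'⟩))
  · rintro Z hZ hXZ hYZ z ((hz | hz) | ⟨x, hx, y, hy, h | h⟩)
    · exact hXZ hz
    · exact hYZ hz
    · exact hZ.out (hXZ hx) (hYZ hy) ⟨h.1.le, h.2.le⟩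
    · exact hZ.out (hYZ hy) (hXZ hx) ⟨h.1.le, h.2.le⟩
end

section
/- For any poset P, the lattice Co(P) of order-convex subsets of P satisfies the dual 2-distributivity identity: a ∧ (x ∨ y ∨ z) = (a ∧ (x ∨ y)) ∨ (a ∧ (x ∨ z)) ∨ (a ∧ (y ∨ z)). -/
lemma subset_cJoin_left {P : Type*} [PartialOrder P] (X Y : Set P) : X ⊆ cJoin X Y :=
  fun _ h => Or.inl (Or.inl h)

lemma subset_cJoin_right {P : Type*} [PartialOrder P] (X Y : Set P) : Y ⊆ cJoin X Y :=
  fun _ h => Or.inl (Or.inr h)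

lemma cJoin_mono {P : Type*} [PartialOrder P] {X X' Y Y' : Set P}
    (hX : X ⊆ X') (hY : Y ⊆ Y') : cJoin X Y ⊆ cJoin X' Y' := by
  rintro z ((h | h) | ⟨x, hx, y, hy, h⟩)
  · exact Or.inl (Or.inl (hX h))
  · exact Or.inl (Or.inr (hY h))
  · exact Or.inr ⟨x, hX hx, y, hY hy, h⟩

lemma cJoin_subset {P : Type*} [PartialOrder P] {X Y U : Set P}
    (hU : U.OrdConnected) (hXU : X ⊆ U) (hYU : Y ⊆ U) : cJoin X Y ⊆ U := by
  rintro z ((h | h) | ⟨x, hx, y, hy, ⟨h1, h2⟩ | ⟨h1, h2⟩⟩)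
  · exact hXU h
  · exact hYU h
  · exact hU.out (hXU hx) (hYU hy) ⟨h1.le, h2.le⟩
  · exact hU.out (hYU hy) (hXU hx) ⟨h1.le, h2.le⟩

lemma cJoin_lower {P : Type*} [PartialOrder P] {X Y : Set P} {a t : P}
    (ha : a ∈ cJoin X Y) (h : a ≤ t) :
    (∃ x ∈ X, x ≤ t) ∨ (∃ y ∈ Y, y ≤ t) := by
  rcases ha with (h1 | h1) | ⟨x, hx, y, hy, ⟨h1, h2⟩ | ⟨h1, h2⟩⟩
  · exact Or.inl ⟨a, h1, h⟩
  · exact Or.inr ⟨a, h1, h⟩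
  · exact Or.inl ⟨x, hx, h1.le.trans h⟩
  · exact Or.inr ⟨y, hy, h1.le.trans h⟩

lemma cJoin_upper {P : Type*} [PartialOrder P] {X Y : Set P} {b t : P}
    (hb : b ∈ cJoin X Y) (h : t ≤ b) :
    (∃ x ∈ X, t ≤ x) ∨ (∃ y ∈ Y, t ≤ y) := by
  rcases hb with (h1 | h1) | ⟨x, hx, y, hy, ⟨h1, h2⟩ | ⟨h1, h2⟩⟩
  · exact Or.inl ⟨b, h1, h⟩
  · exact Or.inr ⟨b, h1, h⟩
  · exact Or.inr ⟨y, hy, h.trans h2.le⟩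
  · exact Or.inl ⟨x, hx, h.trans h2.le⟩

lemma cJoin_ordConnected {P : Type*} [PartialOrder P] {X Y : Set P}
    (hX : X.OrdConnected) (hY : Y.OrdConnected) : (cJoin X Y).OrdConnected := by
  constructor
  intro a ha b hb t ht
  rcases cJoin_lower ha ht.1 with ⟨x, hx, hxt⟩ | ⟨y, hy, hyt⟩ <;>
    rcases cJoin_upper hb ht.2 with ⟨x', hx', htx⟩ | ⟨y', hy', hty⟩
  · exact Or.inl (Or.inl (hX.out hx hx' ⟨hxt, htx⟩))
  · rcases eq_or_lt_of_le hxt with rfl | h1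
    · exact Or.inl (Or.inl hx)
    · rcases eq_or_lt_of_le hty with rfl | h2
      · exact Or.inl (Or.inr hy')
      · exact Or.inr ⟨x, hx, y', hy', Or.inl ⟨h1, h2⟩⟩
  · rcases eq_or_lt_of_le hyt with rfl | h1
    · exact Or.inl (Or.inr hy)
    · rcases eq_or_lt_of_le htx with rfl | h2
      · exact Or.inl (Or.inl hx')
      · exact Or.inr ⟨x', hx', y, hy, Or.inr ⟨h1, h2⟩⟩
  · exact Or.inl (Or.inr (hY.out hy hy' ⟨hyt, hty⟩))

/-- `Co(P)` satisfies dual 2-distributivity. -/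
theorem co_dual_two_distributive {P : Type*} [PartialOrder P]
    (A X Y Z : Set P) (hA : A.OrdConnected) (hX : X.OrdConnected)
    (hY : Y.OrdConnected) (hZ : Z.OrdConnected) :
    A ∩ cJoin (cJoin X Y) Z =
      cJoin (cJoin (A ∩ cJoin X Y) (A ∩ cJoin X Z)) (A ∩ cJoin Y Z) := by
  apply Set.Subset.antisymm
  · rintro a ⟨haA, (h | h) | ⟨u, hu, z, hz, ⟨h1, h2⟩ | ⟨h1, h2⟩⟩⟩
    · -- a ∈ cJoin X Y
      exact Or.inl (Or.inl (Or.inl (Or.inl ⟨haA, h⟩)))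
    · -- a ∈ Z, so a ∈ cJoin Y Z
      exact Or.inl (Or.inr ⟨haA, Or.inl (Or.inr h)⟩)
    · -- u < a < z with u ∈ cJoin X Y, z ∈ Z
      rcases hu with (hu | hu) | ⟨x, hx, y, hy, ⟨g1, g2⟩ | ⟨g1, g2⟩⟩
      · -- u ∈ X : a ∈ cJoin X Z
        exact Or.inl (Or.inl (Or.inl (Or.inr ⟨haA, Or.inr ⟨u, hu, z, hz, Or.inl ⟨h1, h2⟩⟩⟩)))
      · -- u ∈ Y : a ∈ cJoin Y Z
        exact Or.inl (Or.inr ⟨haA, Or.inr ⟨u, hu, z, hz, Or.inl ⟨h1, h2⟩⟩⟩)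
      · -- x < u < y : x < a < z, a ∈ cJoin X Z
        exact Or.inl (Or.inl (Or.inl (Or.inr ⟨haA,
          Or.inr ⟨x, hx, z, hz, Or.inl ⟨g1.trans h1, h2⟩⟩⟩)))
      · -- y < u < x : y < a < z, a ∈ cJoin Y Z
        exact Or.inl (Or.inr ⟨haA, Or.inr ⟨y, hy, z, hz, Or.inl ⟨g1.trans h1, h2⟩⟩⟩)
    · -- z < a < u with u ∈ cJoin X Y, z ∈ Z
      rcases hu with (hu | hu) | ⟨x, hx, y, hy, ⟨g1, g2⟩ | ⟨g1, g2⟩⟩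
      · exact Or.inl (Or.inl (Or.inl (Or.inr ⟨haA, Or.inr ⟨u, hu, z, hz, Or.inr ⟨h1, h2⟩⟩⟩)))
      · exact Or.inl (Or.inr ⟨haA, Or.inr ⟨u, hu, z, hz, Or.inr ⟨h1, h2⟩⟩⟩)
      · -- x < u < y : z < a < y, a ∈ cJoin Y Z
        exact Or.inl (Or.inr ⟨haA, Or.inr ⟨y, hy, z, hz, Or.inr ⟨h1, h2.trans g2⟩⟩⟩)
      · -- y < u < x : z < a < x, a ∈ cJoin X Z
        exact Or.inl (Or.inl (Or.inl (Or.inr ⟨haA,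
          Or.inr ⟨x, hx, z, hz, Or.inr ⟨h1, h2.trans g2⟩⟩⟩)))
  · have hbig : (cJoin (cJoin X Y) Z).OrdConnected :=
      cJoin_ordConnected (cJoin_ordConnected hX hY) hZ
    have hU : (A ∩ cJoin (cJoin X Y) Z).OrdConnected := hA.inter hbig
    refine cJoin_subset hU (cJoin_subset hU ?_ ?_) ?_
    · exact Set.inter_subset_inter_right A (subset_cJoin_left (cJoin X Y) Z)
    · exact Set.inter_subset_inter_right A (cJoin_mono (subset_cJoin_left X Y) subset_rfl)
    · exact Set.inter_subset_inter_right A (cJoin_mono (subset_cJoin_right X Y) subset_rfl)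
end

section
/- In any lattice satisfying the Stirlitz identity (S), the dual 2-distributivity identity a ∧ (x ∨ y ∨ z) = (a ∧ (x ∨ y)) ∨ (a ∧ (x ∨ z)) ∨ (a ∧ (y ∨ z)) holds. -/
/-- The Stirlitz identity (S). -/
def StirlitzId (L : Type*) [Lattice L] : Prop :=
  ∀ a b b₀ b₁ c : L,
    a ⊓ ((b ⊓ (b₀ ⊔ b₁)) ⊔ c) =
      (a ⊓ (b ⊓ (b₀ ⊔ b₁))) ⊔
        (a ⊓ (b₀ ⊔ c) ⊓ (((b ⊓ (b₀ ⊔ b₁)) ⊓ (a ⊔ b₀)) ⊔ c)) ⊔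
        (a ⊓ (b₁ ⊔ c) ⊓ (((b ⊓ (b₀ ⊔ b₁)) ⊓ (a ⊔ b₁)) ⊔ c))

/-- The Stirlitz identity implies dual 2-distributivity. -/
theorem stirlitz_implies_dual_two_distributive {L : Type*} [Lattice L] (hS : StirlitzId L) :
    ∀ a x y z : L, a ⊓ (x ⊔ y ⊔ z) = (a ⊓ (x ⊔ y)) ⊔ (a ⊓ (x ⊔ z)) ⊔ (a ⊓ (y ⊔ z)) := by
  intro a x y z
  have h := hS a (x ⊔ y) x y z
  simp only [inf_idem] at h
  apply le_antisymm
  · rw [h]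
    refine sup_le_sup (sup_le_sup le_rfl inf_le_left) inf_le_left
  · refine sup_le (sup_le ?_ ?_) ?_
    · exact inf_le_inf_left a le_sup_left
    · exact inf_le_inf_left a (sup_le (le_sup_left.trans le_sup_left) le_sup_right)
    · exact inf_le_inf_left a (sup_le (le_sup_right.trans le_sup_left) le_sup_right)
end

section
/- Every lattice satisfying the Stirlitz identity (S) satisfies the identity (SD∨²): x ∨ (y ∧ z) = x ∨ (y ∧ (x ∨ (z ∧ (x ∨ y)))). In particular, every lattice satisfying (S) is join-semidistributive. -/
/-- The Stirlitz identity implies (SD∨²), and in particular join-semidistributivity. -/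
theorem stirlitz_implies_sd_sq {L : Type*} [Lattice L] (hS : StirlitzId L) :
    (∀ x y z : L, x ⊔ (y ⊓ z) = x ⊔ (y ⊓ (x ⊔ (z ⊓ (x ⊔ y))))) ∧
    (∀ x y z : L, x ⊔ y = x ⊔ z → x ⊔ y = x ⊔ (y ⊓ z)) := by
  have h1 : ∀ x y z : L, x ⊔ (y ⊓ z) = x ⊔ (y ⊓ (x ⊔ (z ⊓ (x ⊔ y)))) := by
    intro x y z
    have hs := hS y z x y x
    have key : y ⊓ ((z ⊓ (x ⊔ y)) ⊔ x) ≤ x ⊔ (y ⊓ z) := by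
      rw [hs]
      refine sup_le (sup_le ?_ ?_) ?_
      · exact le_sup_of_le_right (le_inf inf_le_left
          (inf_le_right.trans inf_le_left))
      · exact le_sup_of_le_left (inf_le_left.trans inf_le_right |>.trans
          (sup_idem x).le)
      · refine inf_le_right.trans (sup_le ?_ le_sup_left)
        exact le_sup_of_le_right (le_inf (inf_le_right.trans (sup_le le_rfl le_rfl))
          (inf_le_left.trans inf_le_left))
    apply le_antisymm
    · refine sup_le le_sup_left (le_sup_of_le_right (le_inf inf_le_left ?_))
      exact le_sup_of_le_right (le_inf inf_le_right (inf_le_left.trans le_sup_right))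
    · refine sup_le le_sup_left ?_
      calc y ⊓ (x ⊔ (z ⊓ (x ⊔ y))) = y ⊓ ((z ⊓ (x ⊔ y)) ⊔ x) := by rw [sup_comm]
        _ ≤ x ⊔ (y ⊓ z) := key
  refine ⟨h1, fun x y z h => ?_⟩
  have h2 := h1 x y z
  rw [h, inf_eq_left.2 (le_sup_right : z ≤ x ⊔ z), ← h,
    inf_eq_left.2 (le_sup_right : y ≤ x ⊔ y)] at h2
  exact h2.symm
end

section
/- Let L be a finitely spatial lattice. Then L is dually 2-distributive if and only if for every join-irreducible p in L and all a, b, c ∈ L, p ≤ a ∨ b ∨ c implies p ≤ a ∨ b or p ≤ a ∨ c or p ≤ b ∨ c. -/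
/-- Dual 2-distributivity. -/
def Dual2Dist (L : Type*) [Lattice L] : Prop :=
  ∀ a x y z : L, a ⊓ (x ⊔ y ⊔ z) = (a ⊓ (x ⊔ y)) ⊔ (a ⊓ (x ⊔ z)) ⊔ (a ⊓ (y ⊔ z))

/-- For a finitely spatial lattice, dual 2-distributivity is equivalent to its
join-irreducible interpretation. -/
theorem dual_two_distributive_iff_jirr {L : Type*} [CompleteLattice L]
    (hsp : ∀ x : L, x = sSup {p | SupIrred p ∧ p ≤ x}) :
    Dual2Dist L ↔
      ∀ p : L, SupIrred p → ∀ a b c : L, p ≤ a ⊔ b ⊔ c →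
        p ≤ a ⊔ b ∨ p ≤ a ⊔ c ∨ p ≤ b ⊔ c := by
  constructor
  · intro hd p hp a b c hle
    have h : p = (p ⊓ (a ⊔ b)) ⊔ (p ⊓ (a ⊔ c)) ⊔ (p ⊓ (b ⊔ c)) := by
      have := hd p a b c
      rwa [inf_eq_left.2 hle] at this
    rcases hp.2 h.symm with h1 | h1
    · rcases hp.2 h1 with h2 | h2
      · exact Or.inl (by rw [← h2]; exact inf_le_right)
      · exact Or.inr (Or.inl (by rw [← h2]; exact inf_le_right))
    · exact Or.inr (Or.inr (by rw [← h1]; exact inf_le_right))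
  · intro H a x y z
    apply le_antisymm
    · conv_lhs => rw [hsp (a ⊓ (x ⊔ y ⊔ z))]
      apply sSup_le
      rintro p ⟨hp, hle⟩
      have hpa : p ≤ a := hle.trans inf_le_left
      rcases H p hp x y z (hle.trans inf_le_right) with h | h | h
      · exact le_sup_of_le_left (le_sup_of_le_left (le_inf hpa h))
      · exact le_sup_of_le_left (le_sup_of_le_right (le_inf hpa h))
      · exact le_sup_of_le_right (le_inf hpa h)
    · refine sup_le (sup_le ?_ ?_) ?_
      · exact inf_le_inf_left a le_sup_left
      · exact inf_le_inf_left a (sup_le (le_sup_of_le_left le_sup_left) le_sup_right)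
      · exact inf_le_inf_left a (sup_le (le_sup_of_le_left le_sup_right) le_sup_right)
end

section
/- Let L be a dually 2-distributive, complete, lower continuous lattice, let p be a join-irreducible element of L, and let a, b ∈ L with p ≤ a ∨ b and p ≰ a, p ≰ b. Then (1) there exist minimal x ≤ a and y ≤ b such that p ≤ x ∨ y, and (2) any such minimal x and y are join-irreducible. -/
/-- Lower continuity of a complete lattice. -/
def LowerCont (L : Type*) [CompleteLattice L] : Prop :=
  ∀ (a : L) (X : Set L), DirectedOn (· ≥ ·) X → a ⊔ sInf X = ⨅ x ∈ X, a ⊔ x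

/-- Existence of a minimal `x ≤ a` with `p ≤ x ⊔ y`, by Zorn and lower continuity. -/
lemma exists_minimal_le_aux {L : Type*} [CompleteLattice L] (hlc : LowerCont L)
    (p a y : L) (h : p ≤ a ⊔ y) :
    ∃ x, x ≤ a ∧ p ≤ x ⊔ y ∧ ∀ x' ≤ x, p ≤ x' ⊔ y → x' = x := by
  set S : Set Lᵒᵈ := {x | OrderDual.ofDual x ≤ a ∧ p ≤ OrderDual.ofDual x ⊔ y} with hS
  have hchain : ∀ c ⊆ S, IsChain (· ≤ ·) c → ∀ z ∈ c, ∃ ub ∈ S, ∀ w ∈ c, w ≤ ub := by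
    intro c hcS hc z hz
    set X : Set L := OrderDual.ofDual '' c with hX
    have hXne : (OrderDual.ofDual z) ∈ X := ⟨z, hz, rfl⟩
    have hdir : DirectedOn (· ≥ ·) X := by
      rintro _ ⟨u, hu, rfl⟩ _ ⟨v, hv, rfl⟩
      rcases eq_or_ne u v with rfl | huv
      · exact ⟨OrderDual.ofDual u, ⟨u, hu, rfl⟩, le_rfl, le_rfl⟩
      · rcases hc hu hv huv with h1 | h1
        · exact ⟨OrderDual.ofDual v, ⟨v, hv, rfl⟩, h1, le_rfl⟩
        · exact ⟨OrderDual.ofDual u, ⟨u, hu, rfl⟩, le_rfl, h1⟩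
    refine ⟨OrderDual.toDual (sInf X), ⟨?_, ?_⟩, ?_⟩
    · exact le_trans (sInf_le hXne) (hcS hz).1
    · have := hlc y X hdir
      have hle : p ≤ ⨅ x ∈ X, y ⊔ x := by
        refine le_iInf fun x => le_iInf fun hx => ?_
        rcases hx with ⟨u, hu, rfl⟩
        have := (hcS hu).2
        rwa [sup_comm]
      show p ≤ sInf X ⊔ y
      rw [sup_comm, this]
      exact hle
    · intro w hw
      show sInf X ≤ OrderDual.ofDual w
      exact sInf_le ⟨w, hw, rfl⟩
  obtain ⟨m, -, hmS, hmax⟩ := zorn_le_nonempty₀ S hchain (OrderDual.toDual a) ⟨le_rfl, h⟩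
  refine ⟨OrderDual.ofDual m, hmS.1, hmS.2, fun x' hx' hpx' => ?_⟩
  have : m ≤ OrderDual.toDual x' := hx'
  have h2 : OrderDual.toDual x' ≤ m :=
    hmax (⟨le_trans hx' hmS.1, hpx'⟩ : OrderDual.toDual x' ∈ S) this
  exact le_antisymm hx' h2

theorem exists_minimal_join_cover {L : Type*} [CompleteLattice L]
    (h2 : Dual2Dist L) (hlc : LowerCont L)
    {p a b : L} (hp : SupIrred p) (hab : p ≤ a ⊔ b) (hpa : ¬p ≤ a) (hpb : ¬p ≤ b) :
    (∃ x y : L, x ≤ a ∧ y ≤ b ∧ p ≤ x ⊔ y ∧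
        (∀ x' ≤ x, p ≤ x' ⊔ y → x' = x) ∧ (∀ y' ≤ y, p ≤ x ⊔ y' → y' = y)) ∧
    (∀ x y : L, x ≤ a → y ≤ b → p ≤ x ⊔ y →
        (∀ x' ≤ x, p ≤ x' ⊔ y → x' = x) → (∀ y' ≤ y, p ≤ x ⊔ y' → y' = y) →
        SupIrred x ∧ SupIrred y) := by
  constructor
  · obtain ⟨x, hxa, hpxb, hxmin⟩ := exists_minimal_le_aux hlc p a b hab
    obtain ⟨y, hyb, hpxy, hymin⟩ := exists_minimal_le_aux hlc p b x (by rwa [sup_comm])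
    rw [sup_comm] at hpxy
    refine ⟨x, y, hxa, hyb, hpxy, fun x' hx' hp' => ?_,
      fun y' hy' hp' => hymin y' hy' (by rwa [sup_comm])⟩
    exact hxmin x' hx' (le_trans hp' (sup_le_sup_left hyb x'))
  · intro x y hxa hyb hpxy hxmin hymin
    have hxne : ¬ IsMin x := by
      intro hmin
      have hxbot : x = ⊥ := le_antisymm (hmin bot_le) bot_le
      exact hpb (le_trans hpxy (by rw [hxbot, bot_sup_eq]; exact hyb))
    have hyne : ¬ IsMin y := by
      intro hmin
      have hybot : y = ⊥ := le_antisymm (hmin bot_le) bot_le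
      exact hpa (le_trans hpxy (by rw [hybot, sup_bot_eq]; exact hxa))
    constructor
    · refine ⟨hxne, fun u v huv => ?_⟩
      have key : p = (p ⊓ x) ⊔ (p ⊓ (u ⊔ y)) ⊔ (p ⊓ (v ⊔ y)) := by
        have := h2 p u v y
        rw [huv] at this
        rw [← this, inf_eq_left.2 hpxy]
      rcases hp.2 key.symm with h1 | h1
      · rcases hp.2 h1 with h3 | h3
        · exact absurd (le_trans (h3 ▸ inf_le_right) hxa) hpa
        · left
          have hux : u ≤ x := huv ▸ le_sup_left
          exact hxmin u hux (h3 ▸ inf_le_right)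
      · right
        have hvx : v ≤ x := huv ▸ le_sup_right
        exact hxmin v hvx (h1 ▸ inf_le_right)
    · refine ⟨hyne, fun u v huv => ?_⟩
      have key : p = (p ⊓ y) ⊔ (p ⊓ (u ⊔ x)) ⊔ (p ⊓ (v ⊔ x)) := by
        have := h2 p u v x
        rw [huv] at this
        rw [← this, inf_eq_left.2 (by rwa [sup_comm] : p ≤ y ⊔ x)]
      rcases hp.2 key.symm with h1 | h1
      · rcases hp.2 h1 with h3 | h3
        · exact absurd (le_trans (h3 ▸ inf_le_right) hyb) hpb
        · left
          have huy : u ≤ y := huv ▸ le_sup_left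
          refine hymin u huy ?_
          rw [sup_comm]
          exact h3 ▸ inf_le_right
      · right
        have hvy : v ≤ y := huv ▸ le_sup_right
        refine hymin v hvy ?_
        rw [sup_comm]
        exact h1 ▸ inf_le_right
end

section
/- Let L be a dually 2-distributive, complete, lower continuous lattice and p a join-irreducible element of L. Then every join-irreducible element a with p D a has a conjugate with respect to p; that is, there exists a join-irreducible b with p ≰ a, p ≰ b, and a, b minimal such that p ≤ a ∨ b. -/
/-- The join-dependency relation `p D q`. -/
def JoinDep {L : Type*} [Lattice L] (p q : L) : Prop :=
  p ≠ q ∧ ∃ x : L, p ≤ q ⊔ x ∧ ∀ q' < q, ¬p ≤ q' ⊔ x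

/-- Zorn's lemma for minimal elements. -/
lemma my_zorn_min {L : Type*} [Preorder L] (T : Set L)
    (ih : ∀ c ⊆ T, IsChain (· ≤ ·) c → ∃ lb ∈ T, ∀ z ∈ c, lb ≤ z) :
    ∃ m, Minimal (· ∈ T) m := by
  obtain ⟨m, hm⟩ := zorn_le₀ (α := Lᵒᵈ) (OrderDual.ofDual ⁻¹' T) (fun c hc hchain => by
    obtain ⟨lb, hlbT, hlb⟩ := ih (OrderDual.ofDual '' c)
      (by rintro _ ⟨z, hz, rfl⟩; exact hc hz)
      (by
        rintro _ ⟨y, hy, rfl⟩ _ ⟨z, hz, rfl⟩ hne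
        rcases hchain hy hz (fun h => hne (congrArg _ h)) with h | h
        · exact Or.inr h
        · exact Or.inl h)
    exact ⟨OrderDual.toDual lb, hlbT, fun z hz => hlb _ ⟨z, hz, rfl⟩⟩)
  exact ⟨OrderDual.ofDual m, hm.1, fun y hy hle => hm.le_of_ge hy hle⟩

/-- Every `a` with `p D a` has a conjugate with respect to `p`. -/
theorem exists_conjugate {L : Type*} [CompleteLattice L]
    (h2 : Dual2Dist L) (hlc : LowerCont L)
    {p a : L} (hp : SupIrred p) (ha : SupIrred a) (hd : JoinDep p a) :
    ∃ b : L, SupIrred b ∧ ¬p ≤ a ∧ ¬p ≤ b ∧ p ≤ a ⊔ b ∧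
      (∀ a' < a, ¬p ≤ a' ⊔ b) ∧ (∀ b' < b, ¬p ≤ a ⊔ b') := by
  obtain ⟨hpa, x, hx1, hx2⟩ := hd
  -- p is not below a
  have hnpa : ¬p ≤ a := by
    intro hle
    rcases lt_or_eq_of_le hle with h | h
    · exact hx2 p h le_sup_left
    · exact hpa h
  set T : Set L := {y | y ≤ x ∧ p ≤ a ⊔ y} with hT
  obtain ⟨b, hbT, hbmin⟩ : ∃ b, Minimal (· ∈ T) b := by
    apply my_zorn_min
    intro c hc hchain
    rcases c.eq_empty_or_nonempty with rfl | ⟨y0, hy0⟩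
    · exact ⟨x, ⟨le_rfl, hx1⟩, fun z hz => hz.elim⟩
    · refine ⟨sInf c, ⟨le_trans (sInf_le_of_le hy0 (hc hy0).1) le_rfl, ?_⟩,
        fun z hz => sInf_le hz⟩
      have hdir : DirectedOn (· ≥ ·) c := by
        intro y hy z hz
        rcases hchain.total hy hz with h | h
        · exact ⟨y, hy, le_refl y, h⟩
        · exact ⟨z, hz, h, le_refl z⟩
      rw [hlc a c hdir]
      exact le_iInf₂ fun y hy => (hc hy).2
  obtain ⟨hbx, hpab⟩ := hbT
  -- p not below b
  have hnpb : ¬p ≤ b := by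
    intro hle
    have habot : (⊥ : L) < a := ha.ne_bot.bot_lt
    exact hx2 ⊥ habot (by simpa using hle.trans hbx)
  -- minimality in the first coordinate
  have hmin1 : ∀ a' < a, ¬p ≤ a' ⊔ b := fun a' ha' hle =>
    hx2 a' ha' (hle.trans (sup_le_sup_left hbx a'))
  -- minimality in the second coordinate
  have hmin2 : ∀ b' < b, ¬p ≤ a ⊔ b' := by
    intro b' hb' hle
    have : b ≤ b' := hbmin ⟨hb'.le.trans hbx, hle⟩ hb'.le
    exact absurd this (not_le_of_gt hb')
  -- b is join-irreducible
  have hbirr : SupIrred b := by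
    constructor
    · intro hmin
      have hb : b = ⊥ := by
        simpa [isMin_iff_eq_bot] using hmin
      apply hnpa
      simpa [hb] using hpab
    · intro u v huv
      by_contra hcon
      push_neg at hcon
      obtain ⟨hu, hv⟩ := hcon
      have hub : u < b := lt_of_le_of_ne (huv ▸ le_sup_left) hu
      have hvb : v < b := lt_of_le_of_ne (huv ▸ le_sup_right) hv
      have key : p = (p ⊓ (a ⊔ u)) ⊔ (p ⊓ (a ⊔ v)) ⊔ (p ⊓ b) := by
        have h3 := h2 p a u v
        rw [sup_assoc, huv, inf_eq_left.2 hpab] at h3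
        exact h3
      rcases hp.2 key.symm with h | h
      · rcases hp.2 h with h' | h'
        · -- p ≤ a ⊔ u, contradicting minimality
          have hpu : p ≤ a ⊔ u := by rw [← h']; exact inf_le_right
          have : b ≤ u := hbmin ⟨hub.le.trans hbx, hpu⟩ hub.le
          exact absurd this (not_le_of_gt hub)
        · have hpv : p ≤ a ⊔ v := by rw [← h']; exact inf_le_right
          have : b ≤ v := hbmin ⟨hvb.le.trans hbx, hpv⟩ hvb.le
          exact absurd this (not_le_of_gt hvb)
      · -- p ≤ u ⊔ v = b, contradiction
        apply hnpb
        rw [← h]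
        exact inf_le_right
  exact ⟨b, hbirr, hnpa, hnpb, hpab, hmin1, hmin2⟩
end

section
/- If a lattice L satisfies the Stirlitz identity (S), then for all join-irreducible a, b, b₀, b₁, c ∈ L with a ≤ b ∨ c, b ≤ b₀ ∨ b₁, and a ≠ b, either there exists b̄ < b with a ≤ b̄ ∨ c, or there exists i < 2 with b ≤ a ∨ bᵢ and a ≤ bᵢ ∨ c. -/
/-- (S) implies its join-irreducible interpretation (S_j). -/
theorem stirlitz_implies_stirlitz_jirr {L : Type*} [Lattice L] (hS : StirlitzId L)
    {a b b₀ b₁ c : L} (ha : SupIrred a) (hb : SupIrred b) (hb0 : SupIrred b₀)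
    (hb1 : SupIrred b₁) (hc : SupIrred c)
    (h1 : a ≤ b ⊔ c) (h2 : b ≤ b₀ ⊔ b₁) (hne : a ≠ b) :
    (∃ b' < b, a ≤ b' ⊔ c) ∨
      (b ≤ a ⊔ b₀ ∧ a ≤ b₀ ⊔ c) ∨ (b ≤ a ⊔ b₁ ∧ a ≤ b₁ ⊔ c) := by
  have hkey := hS a b b₀ b₁ c
  rw [inf_eq_left.2 h2, inf_eq_left.2 h1] at hkey
  rcases ha.2 hkey.symm with h | h
  · rcases ha.2 h with h' | h'
    · -- a = a ⊓ b, so a ≤ b, a < b since a ≠ b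
      left
      exact ⟨a, lt_of_le_of_ne (inf_eq_left.1 h') hne, le_sup_left⟩
    · -- a = a ⊓ (b₀ ⊔ c) ⊓ ((b ⊓ (a ⊔ b₀)) ⊔ c)
      have h0 : a ≤ b₀ ⊔ c := le_of_eq_of_le h'.symm (le_trans inf_le_left inf_le_right)
      have hbc : a ≤ (b ⊓ (a ⊔ b₀)) ⊔ c := le_of_eq_of_le h'.symm inf_le_right
      by_cases hba : b ≤ a ⊔ b₀
      · exact Or.inr (Or.inl ⟨hba, h0⟩)
      · left
        exact ⟨b ⊓ (a ⊔ b₀), lt_of_le_of_ne inf_le_left (fun he => hba (inf_eq_left.1 he)), hbc⟩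
  · have h0 : a ≤ b₁ ⊔ c := le_of_eq_of_le h.symm (le_trans inf_le_left inf_le_right)
    have hbc : a ≤ (b ⊓ (a ⊔ b₁)) ⊔ c := le_of_eq_of_le h.symm inf_le_right
    by_cases hba : b ≤ a ⊔ b₁
    · exact Or.inr (Or.inr ⟨hba, h0⟩)
    · left
      exact ⟨b ⊓ (a ⊔ b₁), lt_of_le_of_ne inf_le_left (fun he => hba (inf_eq_left.1 he)), hbc⟩
end

section
/- If a lattice L satisfies the Bond identity (B), then for all join-irreducible x, a₀, a₁, b₀, b₁ ∈ L with x ≤ a₀ ∨ a₁ and x ≤ b₀ ∨ b₁, either x ≤ aᵢ or x ≤ bᵢ for some i < 2, or x ≤ a₀ ∨ b₀ and x ≤ a₁ ∨ b₁, or x ≤ a₀ ∨ b₁ and x ≤ a₁ ∨ b₀. -/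
/-- The Bond identity (B). -/
def BondId (L : Type*) [Lattice L] : Prop :=
  ∀ x a₀ a₁ b₀ b₁ : L,
    x ⊓ (a₀ ⊔ a₁) ⊓ (b₀ ⊔ b₁) =
      ((x ⊓ a₀ ⊓ (b₀ ⊔ b₁)) ⊔ (x ⊓ b₀ ⊓ (a₀ ⊔ a₁))) ⊔
      ((x ⊓ a₁ ⊓ (b₀ ⊔ b₁)) ⊔ (x ⊓ b₁ ⊓ (a₀ ⊔ a₁))) ⊔
      (x ⊓ (a₀ ⊔ a₁) ⊓ (b₀ ⊔ b₁) ⊓ (a₀ ⊔ b₀) ⊓ (a₁ ⊔ b₁)) ⊔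
      (x ⊓ (a₀ ⊔ a₁) ⊓ (b₀ ⊔ b₁) ⊓ (a₀ ⊔ b₁) ⊓ (a₁ ⊔ b₀))

/-- (B) implies its join-irreducible interpretation (B_j). -/
theorem bond_implies_bond_jirr {L : Type*} [Lattice L] (hB : BondId L)
    {x a₀ a₁ b₀ b₁ : L} (hx : SupIrred x) (ha0 : SupIrred a₀) (ha1 : SupIrred a₁)
    (hb0 : SupIrred b₀) (hb1 : SupIrred b₁)
    (h1 : x ≤ a₀ ⊔ a₁) (h2 : x ≤ b₀ ⊔ b₁) :
    x ≤ a₀ ∨ x ≤ a₁ ∨ x ≤ b₀ ∨ x ≤ b₁ ∨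
      (x ≤ a₀ ⊔ b₀ ∧ x ≤ a₁ ⊔ b₁) ∨ (x ≤ a₀ ⊔ b₁ ∧ x ≤ a₁ ⊔ b₀) := by
  have h := hB x a₀ a₁ b₀ b₁
  rw [inf_eq_left.mpr h1, inf_eq_left.mpr h2] at h
  have aux : ∀ u v w : L, x = u ⊓ v ⊓ w → x ≤ v ∧ x ≤ w := fun u v w he =>
    ⟨he.le.trans (le_trans inf_le_left inf_le_right), he.le.trans inf_le_right⟩
  rcases hx.2 h.symm with h' | h6
  · rcases hx.2 h' with h'' | h5
    · rcases hx.2 h'' with h3 | h3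
      · rcases hx.2 h3 with h4 | h4
        · exact Or.inl (aux _ _ _ h4.symm).1
        · exact Or.inr (Or.inr (Or.inl (aux _ _ _ h4.symm).1))
      · rcases hx.2 h3 with h4 | h4
        · exact Or.inr (Or.inl (aux _ _ _ h4.symm).1)
        · exact Or.inr (Or.inr (Or.inr (Or.inl (aux _ _ _ h4.symm).1)))
    · exact Or.inr (Or.inr (Or.inr (Or.inr (Or.inl (aux _ _ _ h5.symm)))))
  · exact Or.inr (Or.inr (Or.inr (Or.inr (Or.inr (aux _ _ _ h6.symm)))))
end

section
/- If a lattice L satisfies the Udav identity (U), then for all join-irreducible x, x₀, x₁, x₂ ∈ L with x ≤ x₀ ∨ x₁, x ≤ x₀ ∨ x₂, and x ≤ x₁ ∨ x₂, one has x ≤ x₀ or x ≤ x₁ or x ≤ x₂. -/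
/-- The Udav identity (U). -/
def UdavId (L : Type*) [Lattice L] : Prop :=
  ∀ x x₀ x₁ x₂ : L,
    x ⊓ (x₀ ⊔ x₁) ⊓ (x₁ ⊔ x₂) ⊓ (x₀ ⊔ x₂) =
      (x ⊓ x₀ ⊓ (x₁ ⊔ x₂)) ⊔ (x ⊓ x₁ ⊓ (x₀ ⊔ x₂)) ⊔ (x ⊓ x₂ ⊓ (x₀ ⊔ x₁))

/-- (U) implies its join-irreducible interpretation (U_j). -/
theorem udav_implies_udav_jirr {L : Type*} [Lattice L] (hU : UdavId L)
    {x x₀ x₁ x₂ : L} (hx : SupIrred x) (h0 : SupIrred x₀) (h1 : SupIrred x₁)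
    (h2 : SupIrred x₂)
    (h01 : x ≤ x₀ ⊔ x₁) (h02 : x ≤ x₀ ⊔ x₂) (h12 : x ≤ x₁ ⊔ x₂) :
    x ≤ x₀ ∨ x ≤ x₁ ∨ x ≤ x₂ := by
  have key := hU x x₀ x₁ x₂
  rw [inf_eq_left.2 h01, inf_eq_left.2 h12, inf_eq_left.2 h02] at key
  rcases hx.2 key.symm with h | h
  · rcases hx.2 h with h' | h'
    · left
      calc x = x ⊓ x₀ ⊓ (x₁ ⊔ x₂) := h'.symm
        _ ≤ x₀ := le_trans inf_le_left inf_le_right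
    · right; left
      calc x = x ⊓ x₁ ⊓ (x₀ ⊔ x₂) := h'.symm
        _ ≤ x₁ := le_trans inf_le_left inf_le_right
  · right; right
    calc x = x ⊓ x₂ ⊓ (x₀ ⊔ x₁) := h.symm
      _ ≤ x₂ := le_trans inf_le_left inf_le_right
end

section
/- Let L be a complete, lower continuous, dually 2-distributive lattice satisfying the join-irreducible interpretations (U_j) and (B_j). Then for every join-irreducible p ∈ L, there exist subsets A and B of D(p) = { x join-irreducible : p D x } such that D(p) = A ∪ B, A ∩ B = ∅, and for all x, y ∈ D(p), p ≤ x ∨ y if and only if (x, y) ∈ (A × B) ∪ (B × A). Moreover the unordered pair {A, B} is unique with these properties. -/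
/-- The join-irreducible interpretation (U_j) of the Udav identity. -/
def UdavJ (L : Type*) [Lattice L] : Prop :=
  ∀ x x₀ x₁ x₂ : L, SupIrred x → SupIrred x₀ → SupIrred x₁ → SupIrred x₂ →
    x ≤ x₀ ⊔ x₁ → x ≤ x₀ ⊔ x₂ → x ≤ x₁ ⊔ x₂ → x ≤ x₀ ∨ x ≤ x₁ ∨ x ≤ x₂

/-- The join-irreducible interpretation (B_j) of the Bond identity. -/
def BondJ (L : Type*) [Lattice L] : Prop :=
  ∀ x a₀ a₁ b₀ b₁ : L, SupIrred x → SupIrred a₀ → SupIrred a₁ → SupIrred b₀ → SupIrred b₁ →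
    x ≤ a₀ ⊔ a₁ → x ≤ b₀ ⊔ b₁ →
    x ≤ a₀ ∨ x ≤ a₁ ∨ x ≤ b₀ ∨ x ≤ b₁ ∨
      (x ≤ a₀ ⊔ b₀ ∧ x ≤ a₁ ⊔ b₁) ∨ (x ≤ a₀ ⊔ b₁ ∧ x ≤ a₁ ⊔ b₀)

-- basic: p not below any member of D(p)
lemma joinDep_not_le {L : Type*} [Lattice L] {p q : L} (h : JoinDep p q) : ¬ p ≤ q := by
  obtain ⟨hne, x, hpx, hmin⟩ := h
  intro hle
  exact hmin p (lt_of_le_of_ne hle hne) le_sup_left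


lemma zorn_min_aux {α : Type*} [Preorder α] (s : Set α)
    (ih : ∀ c ⊆ s, IsChain (· ≤ ·) c → ∀ y ∈ c, ∃ lb ∈ s, ∀ z ∈ c, lb ≤ z)
    (x : α) (hxs : x ∈ s) : ∃ m ∈ s, ∀ z ∈ s, z ≤ m → m ≤ z := by
  have key : ∀ c ⊆ (OrderDual.ofDual ⁻¹' s : Set αᵒᵈ), IsChain (· ≤ ·) c → ∀ y ∈ c,
      ∃ ub ∈ (OrderDual.ofDual ⁻¹' s : Set αᵒᵈ), ∀ z ∈ c, z ≤ ub := by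
    intro c hcs hc y hy
    have hc' : IsChain (· ≤ ·) (OrderDual.ofDual '' c) := by
      rintro _ ⟨a, ha, rfl⟩ _ ⟨b, hb, rfl⟩ hne
      have hne' : a ≠ b := fun h => hne (by rw [h])
      rcases hc ha hb hne' with h | h
      · exact Or.inr h
      · exact Or.inl h
    obtain ⟨lb, hlbs, hlb⟩ := ih (OrderDual.ofDual '' c)
      (by rintro _ ⟨a, ha, rfl⟩; exact hcs ha) hc' (OrderDual.ofDual y) ⟨y, hy, rfl⟩
    exact ⟨OrderDual.toDual lb, hlbs, fun z hz => hlb (OrderDual.ofDual z) ⟨z, hz, rfl⟩⟩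
  obtain ⟨m, _, hmem, hmax⟩ :=
    zorn_le_nonempty₀ (α := αᵒᵈ) (OrderDual.ofDual ⁻¹' s) key (OrderDual.toDual x) hxs
  exact ⟨OrderDual.ofDual m, hmem, fun z hz hzm => hmax hz hzm⟩

-- key analytic lemma
lemma edge_exists {L : Type*} [CompleteLattice L]
    (h2 : Dual2Dist L) (hlc : LowerCont L) {p q : L} (hp : SupIrred p) (hq : SupIrred q)
    (hdep : JoinDep p q) : ∃ r : L, SupIrred r ∧ JoinDep p r ∧ p ≤ q ⊔ r := by
  obtain ⟨hne, x, hpx, hmin⟩ := hdep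
  have hpnq : ¬ p ≤ q := joinDep_not_le ⟨hne, x, hpx, hmin⟩
  have hqbot : (⊥ : L) < q := hq.ne_bot.bot_lt
  have hpnx : ¬ p ≤ x := by
    intro h
    exact hmin ⊥ hqbot (by simpa using h)
  set X : Set L := {x' | x' ≤ x ∧ p ≤ q ⊔ x'} with hX
  have hxX : x ∈ X := ⟨le_rfl, hpx⟩
  -- get a minimal element of X via Zorn in the dual order
  obtain ⟨r, hrX, hrmin⟩ : ∃ r ∈ X, ∀ z ∈ X, z ≤ r → r ≤ z := by
    refine zorn_min_aux X ?_ x hxX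
    intro c hcX hc y hy
    refine ⟨sInf c, ⟨?_, ?_⟩, fun z hz => sInf_le hz⟩
    · exact le_trans (sInf_le hy) (hcX hy).1
    · have hdir : DirectedOn (· ≥ ·) c := by
        intro a ha b hb
        rcases hc.total ha hb with h | h
        · exact ⟨a, ha, le_rfl, h⟩
        · exact ⟨b, hb, h, le_rfl⟩
      rw [hlc q c hdir]
      exact le_iInf₂ fun z hz => (hcX hz).2
  obtain ⟨hrx, hpqr⟩ := hrX
  have hpnr : ¬ p ≤ r := fun h => hpnx (h.trans hrx)
  have hrirr : SupIrred r := by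
    constructor
    · intro hmr
      have : r = ⊥ := hmr.eq_bot
      rw [this, sup_bot_eq] at hpqr
      exact hpnq hpqr
    · intro b c hbc
      by_contra hcon
      push_neg at hcon
      obtain ⟨hbne, hcne⟩ := hcon
      have hbr : b < r := lt_of_le_of_ne (le_sup_left.trans_eq hbc) hbne
      have hcr : c < r := lt_of_le_of_ne (le_sup_right.trans_eq hbc) hcne
      have hd := h2 p q b c
      have h1 : q ⊔ b ⊔ c = q ⊔ r := by rw [sup_assoc, hbc]
      rw [h1, inf_eq_left.mpr hpqr] at hd
      -- p = (p ⊓ (q⊔b)) ⊔ (p ⊓ (q⊔c)) ⊔ (p ⊓ (b⊔c))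
      rcases hp.2 hd.symm with h' | h'
      · rcases hp.2 h' with h'' | h''
        · have : p ≤ q ⊔ b := h'' ▸ inf_le_right
          exact absurd (hrmin b ⟨hbr.le.trans hrx, this⟩ hbr.le) (not_le_of_gt hbr)
        · have : p ≤ q ⊔ c := h'' ▸ inf_le_right
          exact absurd (hrmin c ⟨hcr.le.trans hrx, this⟩ hcr.le) (not_le_of_gt hcr)
      · have : p ≤ b ⊔ c := h' ▸ inf_le_right
        rw [hbc] at this
        exact hpnr this
  refine ⟨r, hrirr, ⟨?_, q, ?_, ?_⟩, hpqr⟩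
  · rintro rfl; exact hpnr le_rfl
  · rwa [sup_comm]
  · intro r' hr' hle
    rw [sup_comm] at hle
    exact absurd (hrmin r' ⟨hr'.le.trans hrx, hle⟩ hr'.le) (not_le_of_gt hr')

/-- Udav–Bond partition of `D(p) = {x join-irreducible | p D x}`. -/
theorem udav_bond_partition {L : Type*} [CompleteLattice L]
    (h2 : Dual2Dist L) (hlc : LowerCont L) (hU : UdavJ L) (hB : BondJ L)
    {p : L} (hp : SupIrred p) :
    ∃ A B : Set L,
      A ∪ B = {x | SupIrred x ∧ JoinDep p x} ∧ A ∩ B = ∅ ∧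
      (∀ x ∈ {x | SupIrred x ∧ JoinDep p x}, ∀ y ∈ {x | SupIrred x ∧ JoinDep p x},
        (p ≤ x ⊔ y ↔ (x ∈ A ∧ y ∈ B) ∨ (x ∈ B ∧ y ∈ A))) ∧
      (∀ A' B' : Set L,
        A' ∪ B' = {x | SupIrred x ∧ JoinDep p x} → A' ∩ B' = ∅ →
        (∀ x ∈ {x | SupIrred x ∧ JoinDep p x}, ∀ y ∈ {x | SupIrred x ∧ JoinDep p x},
          (p ≤ x ⊔ y ↔ (x ∈ A' ∧ y ∈ B') ∨ (x ∈ B' ∧ y ∈ A'))) →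
        (A' = A ∧ B' = B) ∨ (A' = B ∧ B' = A)) := by
  classical
  set D : Set L := {x | SupIrred x ∧ JoinDep p x} with hD
  have noP : ∀ x ∈ D, ¬ p ≤ x := fun x hx => joinDep_not_le hx.2
  have tri : ∀ x ∈ D, ∀ y ∈ D, ∀ z ∈ D, p ≤ x ⊔ y → p ≤ x ⊔ z → p ≤ y ⊔ z → False := by
    intro x hx y hy z hz e1 e2 e3
    rcases hU p x y z hp hx.1 hy.1 hz.1 e1 e2 e3 with h | h | h
    exacts [noP x hx h, noP y hy h, noP z hz h]
  have bond : ∀ a₀ ∈ D, ∀ a₁ ∈ D, ∀ b₀ ∈ D, ∀ b₁ ∈ D, p ≤ a₀ ⊔ a₁ → p ≤ b₀ ⊔ b₁ →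
      (p ≤ a₀ ⊔ b₀ ∧ p ≤ a₁ ⊔ b₁) ∨ (p ≤ a₀ ⊔ b₁ ∧ p ≤ a₁ ⊔ b₀) := by
    intro a₀ h0 a₁ h1 b₀ h2 b₁ h3 e1 e2
    rcases hB p a₀ a₁ b₀ b₁ hp h0.1 h1.1 h2.1 h3.1 e1 e2 with h | h | h | h | h | h
    exacts [absurd h (noP _ h0), absurd h (noP _ h1), absurd h (noP _ h2),
      absurd h (noP _ h3), Or.inl h, Or.inr h]
  by_cases hne : ∃ q, q ∈ D
  · obtain ⟨q, hqD⟩ := hne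
    obtain ⟨r, hrI, hrdep, hqr⟩ := edge_exists h2 hlc hp hqD.1 hqD.2
    have hrD : r ∈ D := ⟨hrI, hrdep⟩
    set A : Set L := {x | x ∈ D ∧ p ≤ x ⊔ r} with hA
    set B : Set L := {x | x ∈ D ∧ p ≤ x ⊔ q} with hB'
    have hqA : q ∈ A := ⟨hqD, hqr⟩
    have hrB : r ∈ B := ⟨hrD, by rwa [sup_comm]⟩
    have hdisj : ∀ x, x ∈ A → x ∈ B → False := by
      rintro x ⟨hxD, hxr⟩ ⟨-, hxq⟩
      exact tri x hxD q hqD r hrD hxq hxr hqr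
    have hcover : ∀ x ∈ D, x ∈ A ∨ x ∈ B := by
      intro x hx
      obtain ⟨y, hyI, hydep, hxy⟩ := edge_exists h2 hlc hp hx.1 hx.2
      rcases bond q hqD r hrD x hx y ⟨hyI, hydep⟩ hqr hxy with ⟨e1, -⟩ | ⟨-, e2⟩
      · exact Or.inr ⟨hx, by rwa [sup_comm]⟩
      · exact Or.inl ⟨hx, by rwa [sup_comm]⟩
    have hedge : ∀ x ∈ D, ∀ y ∈ D, (p ≤ x ⊔ y ↔ (x ∈ A ∧ y ∈ B) ∨ (x ∈ B ∧ y ∈ A)) := by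
      intro x hx y hy
      constructor
      · intro h
        rcases hcover x hx with hxA | hxB
        · refine Or.inl ⟨hxA, ?_⟩
          rcases hcover y hy with hyA | hyB
          · exact absurd h (fun h => tri x hx y hy r hrD h hxA.2 hyA.2)
          · exact hyB
        · refine Or.inr ⟨hxB, ?_⟩
          rcases hcover y hy with hyA | hyB
          · exact hyA
          · exact absurd h (fun h => tri x hx y hy q hqD h hxB.2 hyB.2)
      · rintro (⟨⟨-, hxr⟩, ⟨-, hyq⟩⟩ | ⟨⟨-, hxq⟩, ⟨-, hyr⟩⟩)
        · rcases bond x hx r hrD y hy q hqD hxr hyq with ⟨e1, -⟩ | ⟨e1, -⟩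
          · exact e1
          · exact absurd e1 (fun h => tri x hx q hqD r hrD h hxr hqr)
        · rcases bond x hx q hqD y hy r hrD hxq hyr with ⟨e1, -⟩ | ⟨e1, -⟩
          · exact e1
          · exact absurd e1 (fun h => tri x hx q hqD r hrD hxq h hqr)
    refine ⟨A, B, ?_, ?_, hedge, ?_⟩
    · apply Set.Subset.antisymm
      · rintro x (⟨hx, -⟩ | ⟨hx, -⟩) <;> exact hx
      · intro x hx
        exact hcover x hx
    · exact Set.eq_empty_iff_forall_notMem.mpr fun x ⟨h1, h2⟩ => hdisj x h1 h2
    · intro A' B' hu hd hiff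
      have hd' : ∀ x, x ∈ A' → x ∈ B' → False := fun x h1 h2 =>
        Set.eq_empty_iff_forall_notMem.mp hd x ⟨h1, h2⟩
      have hmemD : ∀ x, x ∈ A' ∨ x ∈ B' ↔ x ∈ D := fun x => by
        rw [← hu]; exact Set.mem_union x A' B'
      have hqD' : q ∈ A' ∪ B' := hu ▸ hqD
      rcases (hiff q hqD r hrD).mp hqr with ⟨hqA', hrB'⟩ | ⟨hqB', hrA'⟩
      · left
        constructor
        · ext x
          constructor
          · intro hxA'
            have hxD : x ∈ D := hu ▸ Set.mem_union_left B' hxA'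
            exact ⟨hxD, (hiff x hxD r hrD).mpr (Or.inl ⟨hxA', hrB'⟩)⟩
          · rintro ⟨hxD, hxr⟩
            rcases (hiff x hxD r hrD).mp hxr with ⟨hxA', -⟩ | ⟨-, hrA'⟩
            · exact hxA'
            · exact absurd hrA' (fun h => hd' r h hrB')
        · ext x
          constructor
          · intro hxB'
            have hxD : x ∈ D := hu ▸ Set.mem_union_right A' hxB'
            exact ⟨hxD, (hiff x hxD q hqD).mpr (Or.inr ⟨hxB', hqA'⟩)⟩
          · rintro ⟨hxD, hxq⟩
            rcases (hiff x hxD q hqD).mp hxq with ⟨-, hqB'⟩ | ⟨hxB', -⟩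
            · exact absurd hqB' (hd' q hqA')
            · exact hxB'
      · right
        constructor
        · ext x
          constructor
          · intro hxA'
            have hxD : x ∈ D := hu ▸ Set.mem_union_left B' hxA'
            exact ⟨hxD, (hiff x hxD q hqD).mpr (Or.inl ⟨hxA', hqB'⟩)⟩
          · rintro ⟨hxD, hxq⟩
            rcases (hiff x hxD q hqD).mp hxq with ⟨hxA', -⟩ | ⟨-, hqA'⟩
            · exact hxA'
            · exact absurd hqA' (fun h => hd' q h hqB')
        · ext x
          constructor
          · intro hxB'
            have hxD : x ∈ D := hu ▸ Set.mem_union_right A' hxB'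
            exact ⟨hxD, (hiff x hxD r hrD).mpr (Or.inr ⟨hxB', hrA'⟩)⟩
          · rintro ⟨hxD, hxr⟩
            rcases (hiff x hxD r hrD).mp hxr with ⟨-, hrB'⟩ | ⟨hxB', -⟩
            · exact absurd hrB' (hd' r hrA')
            · exact hxB'
  · push_neg at hne
    refine ⟨∅, ∅, ?_, ?_, ?_, ?_⟩
    · rw [Set.union_empty]
      exact (Set.eq_empty_iff_forall_notMem.mpr hne).symm
    · simp
    · intro x hx
      exact absurd hx (hne x)
    · intro A' B' hu hd hiff
      left
      have hA' : A' = ∅ := by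
        rw [Set.eq_empty_iff_forall_notMem]
        intro x hx
        exact hne x (hu ▸ Set.mem_union_left B' hx)
      have hB' : B' = ∅ := by
        rw [Set.eq_empty_iff_forall_notMem]
        intro x hx
        exact hne x (hu ▸ Set.mem_union_right A' hx)
      exact ⟨hA', hB'⟩
end

section
/- Let L be a lattice satisfying the axioms (S_j) and (U_j), and let a, b, b₀, b₁, c be join-irreducible elements of L with a ≠ b, a ≤ b ∨ c with b minimal such (i.e., a ≰ b̄ ∨ c for every b̄ < b), and b ≤ b₀ ∨ b₁ with b ≰ b₀ and b ≰ b₁. Then: (1) for each i < 2, the conjunction of b ≤ a ∨ bᵢ and a ≤ bᵢ ∨ c is equivalent to the single inequality b ≤ bᵢ ∨ c; and (2) there is exactly one i < 2 such that b ≤ bᵢ ∨ c. -/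
/-- The join-irreducible interpretation (S_j) of the Stirlitz identity. -/
def StirlitzJ (L : Type*) [Lattice L] : Prop :=
  ∀ a b b₀ b₁ c : L, SupIrred a → SupIrred b → SupIrred b₀ → SupIrred b₁ → SupIrred c →
    a ≤ b ⊔ c → b ≤ b₀ ⊔ b₁ → a ≠ b →
    (∃ b' < b, a ≤ b' ⊔ c) ∨ (b ≤ a ⊔ b₀ ∧ a ≤ b₀ ⊔ c) ∨ (b ≤ a ⊔ b₁ ∧ a ≤ b₁ ⊔ c)

/-- Choosing orientation with Stirlitz. -/
theorem one_direction {L : Type*} [Lattice L] (hS : StirlitzJ L) (hU : UdavJ L)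
    {a b b₀ b₁ c : L} (ha : SupIrred a) (hb : SupIrred b) (hb0 : SupIrred b₀)
    (hb1 : SupIrred b₁) (hc : SupIrred c) (hne : a ≠ b)
    (habc : a ≤ b ⊔ c) (hmin : ∀ b' < b, ¬a ≤ b' ⊔ c)
    (hbb : b ≤ b₀ ⊔ b₁) (hnb0 : ¬b ≤ b₀) (hnb1 : ¬b ≤ b₁) :
    ((b ≤ a ⊔ b₀ ∧ a ≤ b₀ ⊔ c) ↔ b ≤ b₀ ⊔ c) ∧
    ((b ≤ a ⊔ b₁ ∧ a ≤ b₁ ⊔ c) ↔ b ≤ b₁ ⊔ c) ∧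
    ((b ≤ b₀ ⊔ c ∧ ¬b ≤ b₁ ⊔ c) ∨ (b ≤ b₁ ⊔ c ∧ ¬b ≤ b₀ ⊔ c)) := by
  have hbc : ¬ b ≤ c := by
    intro h
    obtain ⟨x, hx⟩ := not_isMin_iff.mp hb.1
    exact hmin x hx (habc.trans (sup_le (h.trans le_sup_right) le_sup_right))
  have hD : (b ≤ a ⊔ b₀ ∧ a ≤ b₀ ⊔ c) ∨ (b ≤ a ⊔ b₁ ∧ a ≤ b₁ ⊔ c) := by
    rcases hS a b b₀ b₁ c ha hb hb0 hb1 hc habc hbb hne with ⟨b', hb', h⟩ | h | h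
    · exact absurd h (hmin b' hb')
    · exact Or.inl h
    · exact Or.inr h
  have fwd : ∀ {x : L}, b ≤ a ⊔ x → a ≤ x ⊔ c → b ≤ x ⊔ c := fun h1 h2 =>
    h1.trans (sup_le h2 le_sup_left)
  have hnot_both : ¬ (b ≤ b₀ ⊔ c ∧ b ≤ b₁ ⊔ c) := by
    rintro ⟨h0, h1⟩
    rcases hU b b₀ b₁ c hb hb0 hb1 hc hbb h0 h1 with h | h | h
    exacts [hnb0 h, hnb1 h, hbc h]
  refine ⟨⟨fun ⟨h1, h2⟩ => fwd h1 h2, fun h0 => ?_⟩,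
          ⟨fun ⟨h1, h2⟩ => fwd h1 h2, fun h1 => ?_⟩, ?_⟩
  · rcases hD with h | ⟨h1, h2⟩
    · exact h
    · exact absurd ⟨h0, fwd h1 h2⟩ hnot_both
  · rcases hD with ⟨h1', h2'⟩ | h
    · exact absurd ⟨fwd h1' h2', h1⟩ hnot_both
    · exact h
  · rcases hD with ⟨h1, h2⟩ | ⟨h1, h2⟩
    · exact Or.inl ⟨fwd h1 h2, fun h => hnot_both ⟨fwd h1 h2, h⟩⟩
    · exact Or.inr ⟨fwd h1 h2, fun h => hnot_both ⟨h, fwd h1 h2⟩⟩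
end

section
/- Let σ = ⟨(aᵢ)_{0≤i≤n}, (a′ᵢ)_{1≤i≤n}⟩ be a Stirlitz track of length n ≥ 1 in a lattice L satisfying (S), (U), and (B). Then aᵢ ≤ a₀ ∨ a_n and aᵢ ≤ a′₁ ∨ a_n for all 0 ≤ i ≤ n. Furthermore, 0 ≤ k < l ≤ n implies a_k ≰ a_l; in particular the elements a₀, …, a_n are pairwise distinct. -/
/-- A Stirlitz track of length `n`: elements `a 0, …, a n` and `a' 1, …, a' n`,
all join-irreducible, such that each `a i ≤ a (i+1) ⊔ a' (i+1)` is a minimal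
nontrivial join-cover, and `a i ≤ a' i ⊔ a (i+1)` for `1 ≤ i ≤ n-1`. -/
def IsStirlitzTrack {L : Type*} [Lattice L] (n : ℕ) (a a' : ℕ → L) : Prop :=
  (∀ i ≤ n, SupIrred (a i)) ∧
  (∀ i, 1 ≤ i → i ≤ n → SupIrred (a' i)) ∧
  (∀ i < n, a i ≤ a (i + 1) ⊔ a' (i + 1) ∧
    ¬a i ≤ a (i + 1) ∧ ¬a i ≤ a' (i + 1) ∧
    (∀ x < a (i + 1), ¬a i ≤ x ⊔ a' (i + 1)) ∧
    (∀ y < a' (i + 1), ¬a i ≤ a (i + 1) ⊔ y)) ∧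
  (∀ i, 1 ≤ i → i < n → a i ≤ a' i ⊔ a (i + 1))

section helpers
variable {L : Type*} [Lattice L]

private lemma sup3_cases {x u v w : L} (h : SupIrred x)
    (e : u ⊔ v ⊔ w = x) : x = u ∨ x = v ∨ x = w := by
  rcases h.2 e with h1 | h1
  · rcases h.2 h1 with h2 | h2
    · exact Or.inl h2.symm
    · exact Or.inr (Or.inl h2.symm)
  · exact Or.inr (Or.inr h1.symm)

private lemma sup6_cases {x t1 t2 t3 t4 t5 t6 : L} (h : SupIrred x)
    (e : ((t1 ⊔ t2) ⊔ (t3 ⊔ t4)) ⊔ t5 ⊔ t6 = x) :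
    x = t1 ∨ x = t2 ∨ x = t3 ∨ x = t4 ∨ x = t5 ∨ x = t6 := by
  rcases sup3_cases h e with h1 | h1 | h1
  · rcases h.2 h1.symm with h2 | h2
    · rcases h.2 h2 with h3 | h3
      · exact Or.inl h3.symm
      · exact Or.inr (Or.inl h3.symm)
    · rcases h.2 h2 with h3 | h3
      · exact Or.inr (Or.inr (Or.inl h3.symm))
      · exact Or.inr (Or.inr (Or.inr (Or.inl h3.symm)))
  · exact Or.inr (Or.inr (Or.inr (Or.inr (Or.inl h1))))
  · exact Or.inr (Or.inr (Or.inr (Or.inr (Or.inr h1))))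

/-- The join-irreducible Stirlitz axiom (S_j). -/
lemma Sj (hS : StirlitzId L) {a b c x y : L}
    (ha : SupIrred a) (hab : a ≤ b ⊔ c) (hnab : ¬ a ≤ b)
    (hmin : ∀ z < b, ¬ a ≤ z ⊔ c) (hbxy : b ≤ x ⊔ y) :
    (a ≤ x ⊔ c ∧ b ≤ a ⊔ x) ∨ (a ≤ y ⊔ c ∧ b ≤ a ⊔ y) := by
  have hid := hS a b x y c
  rw [inf_eq_left.2 hbxy] at hid
  rw [inf_eq_left.2 hab] at hid
  rcases sup3_cases ha hid.symm with h | h | h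
  · exact absurd (h.le.trans inf_le_right) hnab
  · left
    have h1 : a ≤ x ⊔ c := h.le.trans (le_trans inf_le_left inf_le_right)
    have h2 : a ≤ (b ⊓ (a ⊔ x)) ⊔ c := h.le.trans inf_le_right
    refine ⟨h1, ?_⟩
    by_contra hcon
    exact hmin _ (lt_of_le_of_ne inf_le_left
      (fun he => hcon (inf_eq_left.1 he))) h2
  · right
    have h1 : a ≤ y ⊔ c := h.le.trans (le_trans inf_le_left inf_le_right)
    have h2 : a ≤ (b ⊓ (a ⊔ y)) ⊔ c := h.le.trans inf_le_right
    refine ⟨h1, ?_⟩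
    by_contra hcon
    exact hmin _ (lt_of_le_of_ne inf_le_left
      (fun he => hcon (inf_eq_left.1 he))) h2

/-- The join-irreducible Udav axiom (U_j). -/
lemma Uj (hU : UdavId L) {x x0 x1 x2 : L} (hx : SupIrred x)
    (h01 : x ≤ x0 ⊔ x1) (h12 : x ≤ x1 ⊔ x2) (h02 : x ≤ x0 ⊔ x2) :
    x ≤ x0 ∨ x ≤ x1 ∨ x ≤ x2 := by
  have hid := hU x x0 x1 x2
  rw [inf_eq_left.2 h01, inf_eq_left.2 h12, inf_eq_left.2 h02] at hid
  rcases sup3_cases hx hid.symm with h | h | h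
  · exact Or.inl (h.le.trans (le_trans inf_le_left inf_le_right))
  · exact Or.inr (Or.inl (h.le.trans (le_trans inf_le_left inf_le_right)))
  · exact Or.inr (Or.inr (h.le.trans (le_trans inf_le_left inf_le_right)))

/-- The join-irreducible Bond axiom (B_j). -/
lemma Bj (hB : BondId L) {x a0 a1 b0 b1 : L} (hx : SupIrred x)
    (ha : x ≤ a0 ⊔ a1) (hb : x ≤ b0 ⊔ b1) :
    x ≤ a0 ∨ x ≤ b0 ∨ x ≤ a1 ∨ x ≤ b1 ∨
      (x ≤ a0 ⊔ b0 ∧ x ≤ a1 ⊔ b1) ∨ (x ≤ a0 ⊔ b1 ∧ x ≤ a1 ⊔ b0) := by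
  have hid := hB x a0 a1 b0 b1
  rw [inf_eq_left.2 ha, inf_eq_left.2 hb] at hid
  rcases sup6_cases hx hid.symm with h | h | h | h | h | h
  · exact Or.inl (h.le.trans (le_trans inf_le_left inf_le_right))
  · exact Or.inr (Or.inl (h.le.trans (le_trans inf_le_left inf_le_right)))
  · exact Or.inr (Or.inr (Or.inl (h.le.trans (le_trans inf_le_left inf_le_right))))
  · exact Or.inr (Or.inr (Or.inr (Or.inl
      (h.le.trans (le_trans inf_le_left inf_le_right)))))
  · exact Or.inr (Or.inr (Or.inr (Or.inr (Or.inl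
      ⟨h.le.trans (le_trans inf_le_left inf_le_right), h.le.trans inf_le_right⟩))))
  · exact Or.inr (Or.inr (Or.inr (Or.inr (Or.inr
      ⟨h.le.trans (le_trans inf_le_left inf_le_right), h.le.trans inf_le_right⟩))))

end helpers
section track
variable {L : Type*} [Lattice L]

/-- Key lemma: for any endpoint `e ≤ n` and `i < e`,
`a i ≤ a' (i+1) ⊔ a e` and `a (i+1) ≤ a i ⊔ a e`. -/
lemma lemA (hS : StirlitzId L) (hU : UdavId L)
    {n : ℕ} {a a' : ℕ → L} (ht : IsStirlitzTrack n a a') :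
    ∀ e ≤ n, ∀ i < e, a i ≤ a' (i + 1) ⊔ a e ∧ a (i + 1) ≤ a i ⊔ a e := by
  obtain ⟨hJ, hJ', hM, hC⟩ := ht
  intro e he
  suffices H : ∀ d i, e - i ≤ d → i < e →
      a i ≤ a' (i + 1) ⊔ a e ∧ a (i + 1) ≤ a i ⊔ a e by
    exact fun i hi => H (e - i) i le_rfl hi
  intro d
  induction d with
  | zero => intro i hd hi; omega
  | succ d ih =>
    intro i hd hi
    rcases Nat.lt_or_ge (i + 1) e with hlt | hge
    · -- inductive step
      have hin : i < n := lt_of_lt_of_le hi he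
      have hi1n : i + 1 < n := lt_of_lt_of_le hlt he
      obtain ⟨hcov, hnb, hnb', hminx, _⟩ := hM i hin
      obtain ⟨hcov1, hnb1, hnb1', _, _⟩ := hM (i + 1) hi1n
      have hC1 : a (i + 1) ≤ a' (i + 1) ⊔ a (i + 2) := hC (i + 1) (by omega) hi1n
      have IH1 : a (i + 1) ≤ a' (i + 2) ⊔ a e := (ih (i + 1) (by omega) hlt).1
      have hJi : SupIrred (a i) := hJ i (by omega)
      have hJi1 : SupIrred (a (i + 1)) := hJ (i + 1) (by omega)
      rcases Sj hS hJi hcov hnb hminx IH1 with ⟨hα, hβ⟩ | ⟨h1, h2⟩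
      · -- bad case: x = a' (i+2)
        exfalso
        -- F1 : a (i+1) ≤ a i ⊔ a (i+2)
        have hF1 : a (i + 1) ≤ a i ⊔ a (i + 2) := by
          rcases Sj hS hJi hcov hnb hminx hC1 with ⟨h1, _⟩ | ⟨_, h2⟩
          · exact absurd (h1.trans (by simp)) hnb'
          · exact h2
        have hlow : a (i + 1) ≤ a i := by
          rcases Uj hU hJi1 hF1 hcov1 hβ with h | h | h
          · exact h
          · exact absurd h hnb1
          · exact absurd h hnb1'
        have hα' : a (i + 1) ≤ a' (i + 1) ⊔ a' (i + 2) := by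
          refine (hlow.trans hα).trans ?_
          rw [sup_comm]
        rcases Uj hU hJi1 hC1 hcov1 hα' with h | h | h
        · exact hnb' (hcov.trans (sup_le h le_rfl))
        · exact hnb1 h
        · exact hnb1' h
      · -- good case: y = a e
        refine ⟨h1.trans ?_, h2⟩
        rw [sup_comm]
    · -- base case: i + 1 = e
      have hie : i + 1 = e := by omega
      subst hie
      have hin : i < n := lt_of_lt_of_le hi he
      refine ⟨((hM i hin).1).trans ?_, le_sup_right⟩
      rw [sup_comm]

lemma lemB (hS : StirlitzId L) (hU : UdavId L)
    {n : ℕ} {a a' : ℕ → L} (ht : IsStirlitzTrack n a a') :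
    ∀ k l, k < l → l ≤ n → ¬ a k ≤ a l := by
  intro k l hkl hln hle
  have hA := lemA hS hU ht l hln
  have chain : ∀ d, k + d ≤ l → a (k + d) ≤ a l := by
    intro d
    induction d with
    | zero => intro _; exact hle
    | succ d ihd =>
      intro hd
      have h1 : k + d < l := by omega
      exact ((hA (k + d) h1).2).trans (sup_le (ihd (by omega)) le_rfl)
  have h2 : a (l - 1) ≤ a l := by
    have := chain (l - 1 - k) (by omega)
    rwa [show k + (l - 1 - k) = l - 1 by omega] at this
  have h3 := (ht.2.2.1 (l - 1) (by omega)).2.1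
  rw [show l - 1 + 1 = l by omega] at h3
  exact h3 h2

/-- Chaining: `a i ≤ a s ⊔ a n` for `s ≤ i ≤ n`. -/
lemma chainAux (hS : StirlitzId L) (hU : UdavId L)
    {n : ℕ} {a a' : ℕ → L} (ht : IsStirlitzTrack n a a') :
    ∀ s i, s ≤ i → i ≤ n → a i ≤ a s ⊔ a n := by
  intro s i hsi hin
  have key : ∀ d, s + d ≤ n → a (s + d) ≤ a s ⊔ a n := by
    intro d
    induction d with
    | zero => intro _; exact le_sup_left
    | succ d ihd =>
      intro hd
      have h1 : s + d < n := by omega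
      exact ((lemA hS hU ht n le_rfl (s + d) h1).2).trans
        (sup_le (ihd (by omega)) le_sup_right)
  have := key (i - s) (by omega)
  rwa [show s + (i - s) = i by omega] at this

end track

theorem stirlitz_track_bounds {L : Type*} [Lattice L]
    (hS : StirlitzId L) (hU : UdavId L) (hB : BondId L)
    {n : ℕ} (hn : 1 ≤ n) {a a' : ℕ → L} (ht : IsStirlitzTrack n a a') :
    (∀ i ≤ n, a i ≤ a 0 ⊔ a n ∧ a i ≤ a' 1 ⊔ a n) ∧
    (∀ k l, k < l → l ≤ n → ¬a k ≤ a l) := by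
  obtain ⟨hJ, hJ', hM, hC⟩ := ht
  have ht : IsStirlitzTrack n a a' := ⟨hJ, hJ', hM, hC⟩
  refine ⟨?_, lemB hS hU ht⟩
  intro i hin
  constructor
  · exact chainAux hS hU ht 0 i (Nat.zero_le i) hin
  · rcases Nat.eq_zero_or_pos i with hi0 | hi1
    · subst hi0
      exact (lemA hS hU ht n le_rfl 0 hn).1
    · -- i ≥ 1 : a i ≤ a 1 ⊔ a n and a 1 ≤ a' 1 ⊔ a n
      have hchain : a i ≤ a 1 ⊔ a n := chainAux hS hU ht 1 i hi1 hin
      have hK : a 1 ≤ a' 1 ⊔ a n := by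
        rcases eq_or_lt_of_le hn with h1n | h1n
        · rw [← h1n]; exact le_sup_right
        · -- 1 < n : Bond argument
          obtain ⟨hcov1, hnb1, hnb1', _, _⟩ := hM 1 h1n
          have hCov1 : a 1 ≤ a' 1 ⊔ a 2 := hC 1 le_rfl h1n
          have h1 : a 1 ≤ a' 2 ⊔ a n := (lemA hS hU ht n le_rfl 1 h1n).1
          have hJ1 : SupIrred (a 1) := hJ 1 (by omega)
          rcases Bj hB hJ1 hCov1 h1 with h | h | h | h | ⟨hc1, _⟩ | ⟨hc2, _⟩
          · exact h.trans le_sup_left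
          · exact absurd h hnb1'
          · exact absurd h hnb1
          · exact absurd h (lemB hS hU ht 1 n h1n le_rfl)
          · -- a 1 ≤ a' 1 ⊔ a' 2 : Udav gives contradiction / goal
            rcases Uj hU hJ1 hCov1 hcov1 hc1 with h | h | h
            · exact h.trans le_sup_left
            · exact absurd h hnb1
            · exact absurd h hnb1'
          · exact hc2
      exact hchain.trans (sup_le hK le_sup_right)
end

section
/- Let P be a poset, let s(x₁, …, xₙ) be a lattice term, and let X₁, …, Xₙ be order-convex subsets of P. Then the evaluation s^P(X₁, …, Xₙ) in the lattice Co(P) is the directed union, over all finite subsets Q of P, of the evaluations s^Q(X₁ ∩ Q, …, Xₙ ∩ Q) in Co(Q). Consequently, any lattice identity valid in Co(Q) for every finite subset Q of P also holds in Co(P). -/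
/-- Lattice terms in `n` variables. -/
inductive LatTerm (n : ℕ) : Type
  | var : Fin n → LatTerm n
  | meet : LatTerm n → LatTerm n → LatTerm n
  | join : LatTerm n → LatTerm n → LatTerm n

/-- Evaluation of a lattice term in `Co(P)`. -/
def evalCo {P : Type*} [PartialOrder P] {n : ℕ} : LatTerm n → (Fin n → Set P) → Set P
  | .var i, X => X i
  | .meet s t, X => evalCo s X ∩ evalCo t X
  | .join s t, X => cJoin (evalCo s X) (evalCo t X)

lemma evalCo_map_subset {A B : Type*} [PartialOrder A] [PartialOrder B] {n : ℕ}
    (f : A → B) (hf : StrictMono f) (t : LatTerm n) (Y : Fin n → Set A) (Z : Fin n → Set B)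
    (h : ∀ i, f '' Y i ⊆ Z i) : f '' evalCo t Y ⊆ evalCo t Z := by
  induction t with
  | var i => exact h i
  | meet s t ihs iht =>
    rintro b ⟨a, ⟨has, hat⟩, rfl⟩
    exact ⟨ihs ⟨a, has, rfl⟩, iht ⟨a, hat, rfl⟩⟩
  | join s t ihs iht =>
    rintro b ⟨a, ha, rfl⟩
    rcases ha with (hs | ht) | ⟨x, hx, y, hy, hxy⟩
    · exact Or.inl (Or.inl (ihs ⟨a, hs, rfl⟩))
    · exact Or.inl (Or.inr (iht ⟨a, ht, rfl⟩))
    · refine Or.inr ⟨f x, ihs ⟨x, hx, rfl⟩, f y, iht ⟨y, hy, rfl⟩, ?_⟩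
      rcases hxy with ⟨h1, h2⟩ | ⟨h1, h2⟩
      · exact Or.inl ⟨hf h1, hf h2⟩
      · exact Or.inr ⟨hf h1, hf h2⟩

lemma inclusion_strictMono {P : Type*} [PartialOrder P] {Q Q' : Set P} (h : Q ⊆ Q') :
    StrictMono (Set.inclusion h) := fun a b hab => by
  simpa [Set.inclusion, Subtype.mk_lt_mk, ← Subtype.coe_lt_coe] using hab

lemma evalCo_incl_mono {P : Type*} [PartialOrder P] {n : ℕ} (t : LatTerm n)
    (X : Fin n → Set P) {Q Q' : Set P} (h : Q ⊆ Q') :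
    Subtype.val '' evalCo (P := ↥Q) t (fun i => Subtype.val ⁻¹' X i) ⊆
      Subtype.val '' evalCo (P := ↥Q') t (fun i => Subtype.val ⁻¹' X i) := by
  rintro p ⟨q, hq, rfl⟩
  have := evalCo_map_subset (Set.inclusion h) (inclusion_strictMono h) t
    (fun i => Subtype.val ⁻¹' X i) (fun i => Subtype.val ⁻¹' X i)
    (by rintro i x ⟨a, ha, rfl⟩; exact ha) ⟨q, hq, rfl⟩
  exact ⟨Set.inclusion h q, this, rfl⟩

lemma evalCo_val_subset {P : Type*} [PartialOrder P] {n : ℕ} (t : LatTerm n)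
    (X : Fin n → Set P) (Q : Set P) :
    Subtype.val '' evalCo (P := ↥Q) t (fun i => Subtype.val ⁻¹' X i) ⊆ evalCo t X :=
  evalCo_map_subset Subtype.val (fun _ _ h => h) t _ X
    (by rintro i x ⟨a, ha, rfl⟩; exact ha)

lemma evalCo_exists_finite {P : Type*} [PartialOrder P] {n : ℕ} (t : LatTerm n)
    (X : Fin n → Set P) : ∀ {p : P}, p ∈ evalCo t X →
    ∃ Q : Set P, Q.Finite ∧
      p ∈ Subtype.val '' evalCo (P := ↥Q) t (fun i => Subtype.val ⁻¹' X i) := by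
  induction t with
  | var i =>
    intro p hp
    exact ⟨{p}, Set.finite_singleton p, ⟨⟨p, rfl⟩, hp, rfl⟩⟩
  | meet s t ihs iht =>
    intro p hp
    obtain ⟨Q₁, hQ₁, q₁, hq₁, hq₁p⟩ := ihs hp.1
    obtain ⟨Q₂, hQ₂, q₂, hq₂, hq₂p⟩ := iht hp.2
    refine ⟨Q₁ ∪ Q₂, hQ₁.union hQ₂, ?_⟩
    have h₁ := evalCo_incl_mono s X (Set.subset_union_left (s := Q₁) (t := Q₂)) ⟨q₁, hq₁, hq₁p⟩
    have h₂ := evalCo_incl_mono t X (Set.subset_union_right (s := Q₁) (t := Q₂)) ⟨q₂, hq₂, hq₂p⟩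
    obtain ⟨a, ha, hap⟩ := h₁
    obtain ⟨b, hb, hbp⟩ := h₂
    have hab : a = b := Subtype.ext (hap.trans hbp.symm)
    exact ⟨a, ⟨ha, hab ▸ hb⟩, hap⟩
  | join s t ihs iht =>
    intro p hp
    rcases hp with (hs | ht) | ⟨x, hx, y, hy, hxy⟩
    · obtain ⟨Q, hQ, q, hq, hqp⟩ := ihs hs
      exact ⟨Q, hQ, q, Or.inl (Or.inl hq), hqp⟩
    · obtain ⟨Q, hQ, q, hq, hqp⟩ := iht ht
      exact ⟨Q, hQ, q, Or.inl (Or.inr hq), hqp⟩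
    · obtain ⟨Q₁, hQ₁, hx'⟩ := ihs hx
      obtain ⟨Q₂, hQ₂, hy'⟩ := iht hy
      refine ⟨Q₁ ∪ Q₂ ∪ {p}, (hQ₁.union hQ₂).union (Set.finite_singleton p), ?_⟩
      have hsub₁ : Q₁ ⊆ Q₁ ∪ Q₂ ∪ {p} := by intro a ha; exact Or.inl (Or.inl ha)
      have hsub₂ : Q₂ ⊆ Q₁ ∪ Q₂ ∪ {p} := by intro a ha; exact Or.inl (Or.inr ha)
      obtain ⟨qx, hqx, hqxp⟩ := evalCo_incl_mono s X hsub₁ hx'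
      obtain ⟨qy, hqy, hqyp⟩ := evalCo_incl_mono t X hsub₂ hy'
      have hpQ : p ∈ Q₁ ∪ Q₂ ∪ {p} := Or.inr rfl
      refine ⟨⟨p, hpQ⟩, Or.inr ⟨qx, hqx, qy, hqy, ?_⟩, rfl⟩
      rcases hxy with ⟨h1, h2⟩ | ⟨h1, h2⟩
      · exact Or.inl ⟨by simpa [← Subtype.coe_lt_coe, hqxp] using h1,
          by simpa [← Subtype.coe_lt_coe, hqyp] using h2⟩
      · exact Or.inr ⟨by simpa [← Subtype.coe_lt_coe, hqyp] using h1,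
          by simpa [← Subtype.coe_lt_coe, hqxp] using h2⟩

lemma preimage_ordConnected {P : Type*} [PartialOrder P] {Q X : Set P}
    (hX : X.OrdConnected) : (Subtype.val ⁻¹' X : Set ↥Q).OrdConnected := by
  constructor
  rintro a ha b hb c hc
  exact hX.out ha hb ⟨hc.1, hc.2⟩

/-- The evaluation of a lattice term in `Co(P)` is the directed union over finite
subsets `Q ⊆ P` of its evaluations in `Co(Q)`; consequently, any lattice identity
valid in every `Co(Q)` for finite `Q ⊆ P` also holds in `Co(P)`. -/
theorem evalCo_directed_union {P : Type*} [PartialOrder P] {n : ℕ} :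
    (∀ (t : LatTerm n) (X : Fin n → Set P), (∀ i, (X i).OrdConnected) →
      (evalCo t X =
        ⋃ Q : {Q : Set P // Q.Finite},
          Subtype.val '' evalCo (P := ↥(Q : Set P)) t (fun i => Subtype.val ⁻¹' X i)) ∧
      Directed (· ⊆ ·)
        (fun Q : {Q : Set P // Q.Finite} =>
          Subtype.val '' evalCo (P := ↥(Q : Set P)) t (fun i => Subtype.val ⁻¹' X i))) ∧
    (∀ s t : LatTerm n,
      (∀ Q : Set P, Q.Finite → ∀ Y : Fin n → Set ↥Q, (∀ i, (Y i).OrdConnected) →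
        evalCo s Y = evalCo t Y) →
      ∀ X : Fin n → Set P, (∀ i, (X i).OrdConnected) → evalCo s X = evalCo t X) := by
  have key : ∀ (t : LatTerm n) (X : Fin n → Set P),
      evalCo t X =
        ⋃ Q : {Q : Set P // Q.Finite},
          Subtype.val '' evalCo (P := ↥(Q : Set P)) t (fun i => Subtype.val ⁻¹' X i) := by
    intro t X
    apply Set.Subset.antisymm
    · intro p hp
      obtain ⟨Q, hQ, hp'⟩ := evalCo_exists_finite t X hp
      exact Set.mem_iUnion.2 ⟨⟨Q, hQ⟩, hp'⟩
    · intro p hp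
      obtain ⟨Q, hp'⟩ := Set.mem_iUnion.1 hp
      exact evalCo_val_subset t X Q hp'
  constructor
  · intro t X _
    refine ⟨key t X, ?_⟩
    intro Q₁ Q₂
    exact ⟨⟨Q₁.1 ∪ Q₂.1, Q₁.2.union Q₂.2⟩,
      evalCo_incl_mono t X Set.subset_union_left,
      evalCo_incl_mono t X Set.subset_union_right⟩
  · intro s t h X hX
    rw [key s X, key t X]
    apply Set.iUnion_congr
    intro Q
    rw [h Q.1 Q.2 _ (fun i => preimage_ordConnected (hX i))]
end
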